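/- Let n ≥ 1, d, κ ≥ 1, ε > 0, let Ω̄ ⊆ ℝ^d be nonempty, and let A(x) := f₁(x)A₁ + ⋯ + f_κ(x)A_κ. Let 𝒱 ⊆ 𝒲 be nonzero linear subspaces of ℂⁿ. Suppose that Λ^𝒱_ε(A(x)) is nonempty for every x ∈ Ω̄, that the point x̂ ∈ Ω̄ satisfies the interpolation property α^𝒱_ε(A(x̂)) = α_ε(A(x̂)), and that x̂ is a global minimizer of x ↦ α^𝒲_ε(A(x)) over Ω̄ (i.e., α^𝒲_ε(A(x̂)) ≤ α^𝒲_ε(A(x)) for all x ∈ Ω̄). Then x̂ is a global minimizer of x ↦ α_ε(A(x)) over Ω̄, i.e., α_ε(A(x̂)) ≤ α_ε(A(x)) for all x ∈ Ω̄. (This is Theorem 3.1 of the paper: if two iterates x^(ℓ) = x^(k) with 2 ≤ ℓ < k generated by the subspace framework coincide, then x^(ℓ) is a global minimizer of α_ε(A(·)) over Ω̄; the hypotheses above are precisely the invariants guaranteed by the algorithm with 𝒱 = 𝒱_ℓ and 𝒲 = 𝒱_{k−1}.) -/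

import Mathlib

noncomputable def enorm2 {ι : Type*} [Fintype ι] (v : ι → ℂ) : ℝ :=
  ‖(WithLp.equiv 2 (ι → ℂ)).symm v‖

noncomputable def sigMin {ι κ : Type*} [Fintype ι] [Fintype κ] (M : Matrix ι κ ℂ) : ℝ :=
  sInf {r : ℝ | ∃ w : κ → ℂ, enorm2 w = 1 ∧ r = enorm2 (M.mulVec w)}

noncomputable def sigV {n : ℕ} (𝒱 : Submodule ℂ (Fin n → ℂ))
    (A : Matrix (Fin n) (Fin n) ℂ) (z : ℂ) : ℝ :=
  sInf {r : ℝ | ∃ v ∈ 𝒱, enorm2 v = 1 ∧ r = enorm2 ((A - z • 1).mulVec v)}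

noncomputable def pspec {n : ℕ} (ε : ℝ) (A : Matrix (Fin n) (Fin n) ℂ) : Set ℂ :=
  {z | sigMin (A - z • 1) ≤ ε}

noncomputable def psa {n : ℕ} (ε : ℝ) (A : Matrix (Fin n) (Fin n) ℂ) : ℝ :=
  sSup (Complex.re '' pspec ε A)

noncomputable def pspecV {n : ℕ} (ε : ℝ) (𝒱 : Submodule ℂ (Fin n → ℂ))
    (A : Matrix (Fin n) (Fin n) ℂ) : Set ℂ :=
  {z | sigV 𝒱 A z ≤ ε}

noncomputable def psaV {n : ℕ} (ε : ℝ) (𝒱 : Submodule ℂ (Fin n → ℂ))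
    (A : Matrix (Fin n) (Fin n) ℂ) : ℝ :=
  sSup (Complex.re '' pspecV ε 𝒱 A)

noncomputable def Amap {n d κ : ℕ} (f : Fin κ → EuclideanSpace ℝ (Fin d) → ℝ)
    (As : Fin κ → Matrix (Fin n) (Fin n) ℂ) (x : EuclideanSpace ℝ (Fin d)) :
    Matrix (Fin n) (Fin n) ℂ :=
  ∑ j, (f j x : ℂ) • As j

noncomputable def opNorm2 {n : ℕ} (Δ : Matrix (Fin n) (Fin n) ℂ) : ℝ :=
  sSup {r : ℝ | ∃ w : Fin n → ℂ, enorm2 w = 1 ∧ r = enorm2 (Δ.mulVec w)}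


/-!
Shrinking the subspace over which the infimum defining `σ` is taken can only increase it, so
`Λ^𝒱_ε ⊆ Λ^𝒲_ε ⊆ Λ_ε` and hence `α^𝒱_ε ≤ α^𝒲_ε ≤ α_ε`; the suprema are genuine because `Λ_ε(A)`
lies in the disc `|z| ≤ ε + ‖A‖`. For every `x ∈ Ω̄` this gives
`α_ε(A(x̂)) = α^𝒱_ε(A(x̂)) ≤ α^𝒲_ε(A(x̂)) ≤ α^𝒲_ε(A(x)) ≤ α_ε(A(x))`.
-/

open Matrix

section Pseudospectra

variable {n : ℕ}

lemma enorm2_eq_norm_toLp (v : Fin n → ℂ) : enorm2 v = ‖WithLp.toLp 2 v‖ := rfl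

lemma enorm2_nonneg (v : Fin n → ℂ) : 0 ≤ enorm2 v := norm_nonneg _

lemma exists_mem_enorm2_eq_one {𝒱 : Submodule ℂ (Fin n → ℂ)} (h𝒱 : 𝒱 ≠ ⊥) :
    ∃ v ∈ 𝒱, enorm2 v = 1 := by
  obtain ⟨v, hv𝒱, hv0⟩ := Submodule.exists_mem_ne_zero_of_ne_bot h𝒱
  have hv : enorm2 v ≠ 0 := by simpa [enorm2_eq_norm_toLp] using hv0
  refine ⟨((enorm2 v : ℂ))⁻¹ • v, 𝒱.smul_mem _ hv𝒱, ?_⟩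
  rw [enorm2_eq_norm_toLp, WithLp.toLp_smul, norm_smul, ← enorm2_eq_norm_toLp, norm_inv,
    Complex.norm_real, Real.norm_of_nonneg (enorm2_nonneg v), inv_mul_cancel₀ hv]

lemma sigMin_sub_smul_one_eq_sigV_top (A : Matrix (Fin n) (Fin n) ℂ) (z : ℂ) :
    sigMin (A - z • 1) = sigV ⊤ A z := by
  simp [sigMin, sigV]

lemma sigV_le_sigV_of_le {𝒱 𝒲 : Submodule ℂ (Fin n → ℂ)} (h𝒱 : 𝒱 ≠ ⊥) (hVW : 𝒱 ≤ 𝒲)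
    (A : Matrix (Fin n) (Fin n) ℂ) (z : ℂ) : sigV 𝒲 A z ≤ sigV 𝒱 A z := by
  obtain ⟨v, hv, hv1⟩ := exists_mem_enorm2_eq_one h𝒱
  refine csInf_le_csInf ⟨0, ?_⟩ ⟨_, v, hv, hv1, rfl⟩ ?_
  · rintro r ⟨w, -, -, rfl⟩
    exact enorm2_nonneg _
  · rintro r ⟨w, hw, hw1, rfl⟩
    exact ⟨w, hVW hw, hw1, rfl⟩

variable {ε : ℝ}

lemma pspecV_mono {𝒱 𝒲 : Submodule ℂ (Fin n → ℂ)} (h𝒱 : 𝒱 ≠ ⊥) (hVW : 𝒱 ≤ 𝒲)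
    (A : Matrix (Fin n) (Fin n) ℂ) : pspecV ε 𝒱 A ⊆ pspecV ε 𝒲 A :=
  fun z hz => (sigV_le_sigV_of_le h𝒱 hVW A z).trans hz

lemma pspecV_subset_pspec {𝒲 : Submodule ℂ (Fin n → ℂ)} (h𝒲 : 𝒲 ≠ ⊥)
    (A : Matrix (Fin n) (Fin n) ℂ) : pspecV ε 𝒲 A ⊆ pspec ε A := by
  intro z hz
  change sigMin _ ≤ ε
  rw [sigMin_sub_smul_one_eq_sigV_top]
  exact pspecV_mono h𝒲 le_top A hz

lemma norm_sub_opNorm_le_enorm2_mulVec (A : Matrix (Fin n) (Fin n) ℂ) (z : ℂ)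
    {w : Fin n → ℂ} (hw : enorm2 w = 1) :
    ‖z‖ - ‖toEuclideanCLM (𝕜 := ℂ) A‖ ≤ enorm2 ((A - z • 1) *ᵥ w) := by
  set T := toEuclideanCLM (𝕜 := ℂ) A
  set x := WithLp.toLp 2 w
  have hx : ‖x‖ = 1 := hw
  have hTx : ‖T x‖ ≤ ‖T‖ := by simpa [hx] using T.le_opNorm x
  have hmul : WithLp.toLp 2 ((A - z • 1) *ᵥ w) = T x - z • x := by
    simp [T, x, sub_mulVec, smul_mulVec, toEuclideanCLM_toLp]
  calc ‖z‖ - ‖T‖ ≤ ‖z • x‖ - ‖T x‖ := by rw [norm_smul, hx, mul_one]; linarith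
    _ ≤ ‖T x - z • x‖ := by rw [norm_sub_rev]; exact norm_sub_norm_le _ _
    _ = enorm2 ((A - z • 1) *ᵥ w) := by rw [enorm2_eq_norm_toLp, hmul]

lemma norm_sub_opNorm_le_sigMin (hn : 1 ≤ n) (A : Matrix (Fin n) (Fin n) ℂ) (z : ℂ) :
    ‖z‖ - ‖toEuclideanCLM (𝕜 := ℂ) A‖ ≤ sigMin (A - z • 1) := by
  have : Nonempty (Fin n) := ⟨⟨0, hn⟩⟩
  obtain ⟨w₀, -, hw₀⟩ :=
    exists_mem_enorm2_eq_one (top_ne_bot (α := Submodule ℂ (Fin n → ℂ)))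
  refine le_csInf ⟨_, w₀, hw₀, rfl⟩ ?_
  rintro r ⟨w, hw, rfl⟩
  exact norm_sub_opNorm_le_enorm2_mulVec A z hw

lemma bddAbove_re_pspec (hn : 1 ≤ n) (A : Matrix (Fin n) (Fin n) ℂ) :
    BddAbove (Complex.re '' pspec ε A) := by
  refine ⟨ε + ‖toEuclideanCLM (𝕜 := ℂ) A‖, ?_⟩
  rintro _ ⟨z, hz, rfl⟩
  have := (norm_sub_opNorm_le_sigMin hn A z).trans hz
  linarith [Complex.re_le_norm z]

lemma psaV_le_psa (hn : 1 ≤ n) {𝒲 : Submodule ℂ (Fin n → ℂ)} (h𝒲 : 𝒲 ≠ ⊥)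
    {A : Matrix (Fin n) (Fin n) ℂ} (hne : (pspecV ε 𝒲 A).Nonempty) :
    psaV ε 𝒲 A ≤ psa ε A :=
  csSup_le_csSup (bddAbove_re_pspec hn A) (hne.image _)
    (Set.image_mono (pspecV_subset_pspec h𝒲 A))

lemma psaV_le_psaV_of_le (hn : 1 ≤ n) {𝒱 𝒲 : Submodule ℂ (Fin n → ℂ)} (h𝒱 : 𝒱 ≠ ⊥)
    (hVW : 𝒱 ≤ 𝒲) {A : Matrix (Fin n) (Fin n) ℂ} (hne : (pspecV ε 𝒱 A).Nonempty) :
    psaV ε 𝒱 A ≤ psaV ε 𝒲 A := by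
  have hbdd : BddAbove (Complex.re '' pspecV ε 𝒲 A) :=
    (bddAbove_re_pspec hn A).mono
      (Set.image_mono (pspecV_subset_pspec (ne_bot_of_le_ne_bot h𝒱 hVW) A))
  exact csSup_le_csSup hbdd (hne.image _) (Set.image_mono (pspecV_mono h𝒱 hVW A))

end Pseudospectra

theorem stmt0_general {n d κ : ℕ} (hn : 1 ≤ n) {ε : ℝ}
    (Ω : Set (EuclideanSpace ℝ (Fin d)))
    (f : Fin κ → EuclideanSpace ℝ (Fin d) → ℝ) (As : Fin κ → Matrix (Fin n) (Fin n) ℂ)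
    (𝒱 𝒲 : Submodule ℂ (Fin n → ℂ)) (h𝒱 : 𝒱 ≠ ⊥) (h𝒲 : 𝒲 ≠ ⊥) (hVW : 𝒱 ≤ 𝒲)
    (hne : ∀ x ∈ Ω, (pspecV ε 𝒱 (Amap f As x)).Nonempty)
    (xhat : EuclideanSpace ℝ (Fin d)) (hxhat : xhat ∈ Ω)
    (hinterp : psaV ε 𝒱 (Amap f As xhat) = psa ε (Amap f As xhat))
    (hmin : ∀ x ∈ Ω, psaV ε 𝒲 (Amap f As xhat) ≤ psaV ε 𝒲 (Amap f As x)) :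
    ∀ x ∈ Ω, psa ε (Amap f As xhat) ≤ psa ε (Amap f As x) := by
  intro x hx
  calc psa ε (Amap f As xhat) = psaV ε 𝒱 (Amap f As xhat) := hinterp.symm
    _ ≤ psaV ε 𝒲 (Amap f As xhat) := psaV_le_psaV_of_le hn h𝒱 hVW (hne xhat hxhat)
    _ ≤ psaV ε 𝒲 (Amap f As x) := hmin x hx
    _ ≤ psa ε (Amap f As x) := psaV_le_psa hn h𝒲 ((hne x hx).mono (pspecV_mono h𝒱 hVW _))

theorem stmt0 {n d κ : ℕ} (hn : 1 ≤ n) (hd : 1 ≤ d) (hκ : 1 ≤ κ) {ε : ℝ} (hε : 0 < ε)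
    (Ω : Set (EuclideanSpace ℝ (Fin d))) (hΩ : Ω.Nonempty)
    (f : Fin κ → EuclideanSpace ℝ (Fin d) → ℝ) (As : Fin κ → Matrix (Fin n) (Fin n) ℂ)
    (𝒱 𝒲 : Submodule ℂ (Fin n → ℂ)) (h𝒱 : 𝒱 ≠ ⊥) (h𝒲 : 𝒲 ≠ ⊥) (hVW : 𝒱 ≤ 𝒲)
    (hne : ∀ x ∈ Ω, (pspecV ε 𝒱 (Amap f As x)).Nonempty)
    (xhat : EuclideanSpace ℝ (Fin d)) (hxhat : xhat ∈ Ω)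
    (hinterp : psaV ε 𝒱 (Amap f As xhat) = psa ε (Amap f As xhat))
    (hmin : ∀ x ∈ Ω, psaV ε 𝒲 (Amap f As xhat) ≤ psaV ε 𝒲 (Amap f As x)) :
    ∀ x ∈ Ω, psa ε (Amap f As xhat) ≤ psa ε (Amap f As x) :=
  stmt0_general hn Ω f As 𝒱 𝒲 h𝒱 h𝒲 hVW hne xhat hxhat hinterp hmin
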